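/- Second-order bias bound for the doubly robust functional: let δ ∈ (0, 1/2], let p₀(x) := ℙ(R = true | X = x) ∈ [δ, 1 − δ] and e₀(x) := ℙ(A = a | X = x, R = true) ≥ δ for all x in the support of X, and let g₀(x) := E[Y | X = x, A = a, R = true]. There exists a constant C, depending only on δ and ℙ(R = false), such that for all functions g : 𝒳 → ℝ, p : 𝒳 → [δ, 1 − δ], e : 𝒳 → [δ, 1], |Φ(g, e, p) − ψ| ≤ C · ‖g − g₀‖₂ · (‖p − p₀‖₂ + ‖e − e₀‖₂), where ‖f‖₂ := (E[f(X)²])^{1/2}, ψ := Σ_x ℙ(X = x | R = false)·E[Y | X = x, A = a, R = true], and Φ(g, e, p) := (1/ℙ(R = false))·E[ ((1 − p(X))·1{R = true, A = a}/(e(X)·p(X)))·(Y − g(X)) + 1{R = false}·g(X) ]. -/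

import Mathlib

/-!
Conditioning on `X`, `ℙ(R = false) · (Φ(g, e, p) - ψ)` equals
`∑ₓ ℙ(X = x) (g - g₀)(x) [(1 - p₀) - (1 - p) p₀ e₀ / (e p)](x)`. The bracket is
`(e (p - p₀) + (1 - p) p₀ (e - e₀)) / (e p)`, hence first order in the nuisance errors:
with `e, p ≥ δ` and `p₀ ∈ [0, 1]` it is at most `δ⁻² (|p - p₀| + |e - e₀|)`. Weighted
Cauchy–Schwarz then gives the bound with `C = δ⁻² / ℙ(R = false)`.
-/

open Finset

attribute [local instance] Classical.propDecidable

variable {Ω : Type*}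

/-- Probability of an event. -/
noncomputable def pr [Fintype Ω] (P : Ω → ℝ) (E : Ω → Prop) : ℝ :=
  ∑ ω, if E ω then P ω else 0

/-- Expectation of a real random variable. -/
noncomputable def ex [Fintype Ω] (P : Ω → ℝ) (Z : Ω → ℝ) : ℝ :=
  ∑ ω, P ω * Z ω

/-- Conditional probability ℙ(F | E) = ℙ(F ∩ E)/ℙ(E). -/
noncomputable def cpr [Fintype Ω] (P : Ω → ℝ) (F E : Ω → Prop) : ℝ :=
  pr P (fun ω => F ω ∧ E ω) / pr P E

/-- Conditional expectation E[Z | E] = E[Z·1_E]/ℙ(E). -/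
noncomputable def cex [Fintype Ω] (P : Ω → ℝ) (Z : Ω → ℝ) (E : Ω → Prop) : ℝ :=
  (∑ ω, if E ω then P ω * Z ω else 0) / pr P E

lemma sum_mul_abs_mul_abs_le_sqrt_mul_sqrt {ι : Type*} (s : Finset ι) {q f h : ι → ℝ}
    (hq : ∀ i, 0 ≤ q i) :
    ∑ i ∈ s, q i * (|f i| * |h i|) ≤ √(∑ i ∈ s, q i * f i ^ 2) * √(∑ i ∈ s, q i * h i ^ 2) := by
  refine le_of_eq_of_le (sum_congr rfl fun i _ => ?_)
    (Real.sum_sqrt_mul_sqrt_le s (fun i => mul_nonneg (hq i) (sq_nonneg (f i)))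
      (fun i => mul_nonneg (hq i) (sq_nonneg (h i))))
  rw [← Real.sqrt_mul (mul_nonneg (hq i) (sq_nonneg (f i))),
    show q i * f i ^ 2 * (q i * h i ^ 2) = (q i * (|f i| * |h i|)) ^ 2 by
      simp only [mul_pow, sq_abs]; ring,
    Real.sqrt_sq (mul_nonneg (hq i) (by positivity))]

lemma abs_sum_mul_mul_le_of_abs_le {ι : Type*} (s : Finset ι) {q f b u v : ι → ℝ} {K : ℝ}
    (hq : ∀ i, 0 ≤ q i) (hK : 0 ≤ K) (hb : ∀ i, |b i| ≤ K * (|u i| + |v i|)) :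
    |∑ i ∈ s, q i * f i * b i|
      ≤ K * √(∑ i ∈ s, q i * f i ^ 2)
          * (√(∑ i ∈ s, q i * u i ^ 2) + √(∑ i ∈ s, q i * v i ^ 2)) := by
  calc |∑ i ∈ s, q i * f i * b i|
      ≤ ∑ i ∈ s, q i * |f i| * |b i| := by
        refine (abs_sum_le_sum_abs _ _).trans_eq (sum_congr rfl fun i _ => ?_)
        rw [abs_mul, abs_mul, abs_of_nonneg (hq i)]
    _ ≤ ∑ i ∈ s, q i * |f i| * (K * (|u i| + |v i|)) :=
        sum_le_sum fun i _ => mul_le_mul_of_nonneg_left (hb i) (mul_nonneg (hq i) (abs_nonneg _))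
    _ = K * (∑ i ∈ s, q i * (|f i| * |u i|) + ∑ i ∈ s, q i * (|f i| * |v i|)) := by
        rw [← sum_add_distrib, mul_sum]
        exact sum_congr rfl fun i _ => by ring
    _ ≤ K * (√(∑ i ∈ s, q i * f i ^ 2) * √(∑ i ∈ s, q i * u i ^ 2)
          + √(∑ i ∈ s, q i * f i ^ 2) * √(∑ i ∈ s, q i * v i ^ 2)) := by
        gcongr <;> exact sum_mul_abs_mul_abs_le_sqrt_mul_sqrt s hq
    _ = _ := by ring

lemma abs_one_sub_sub_div_mul_le {δ p e p₀ e₀ : ℝ} (hδ : 0 < δ) (hp : δ ≤ p) (hp1 : p ≤ 1)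
    (he : δ ≤ e) (he1 : e ≤ 1) (hp₀ : 0 ≤ p₀) (hp₀1 : p₀ ≤ 1) :
    |(1 - p₀) - (1 - p) / (e * p) * (p₀ * e₀)| ≤ (δ * δ)⁻¹ * (|p - p₀| + |e - e₀|) := by
  have hδe : δ * δ ≤ e * p := mul_le_mul he hp hδ.le (hδ.le.trans he)
  have hep : 0 < e * p := (mul_pos hδ hδ).trans_le hδe
  have hfirst_order : (1 - p₀) - (1 - p) / (e * p) * (p₀ * e₀)
      = (e * (p - p₀) + ((1 - p) * p₀) * (e - e₀)) / (e * p) := by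
    have : e ≠ 0 := (hδ.trans_le he).ne'
    have : p ≠ 0 := (hδ.trans_le hp).ne'
    field_simp
    ring
  have hnum : |e * (p - p₀) + ((1 - p) * p₀) * (e - e₀)| ≤ |p - p₀| + |e - e₀| := by
    have he' : |e| ≤ 1 := by rw [abs_of_nonneg (hδ.le.trans he)]; exact he1
    have hc : |(1 - p) * p₀| ≤ 1 := by
      rw [abs_of_nonneg (mul_nonneg (by linarith) hp₀)]
      exact mul_le_one₀ (by linarith) hp₀ hp₀1
    calc |e * (p - p₀) + ((1 - p) * p₀) * (e - e₀)|
        ≤ |e| * |p - p₀| + |(1 - p) * p₀| * |e - e₀| := by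
          rw [← abs_mul, ← abs_mul]; exact abs_add_le _ _
      _ ≤ 1 * |p - p₀| + 1 * |e - e₀| := by gcongr
      _ = |p - p₀| + |e - e₀| := by ring
  rw [hfirst_order, abs_div, abs_of_pos hep, div_eq_inv_mul]
  exact mul_le_mul (inv_anti₀ (mul_pos hδ hδ) hδe) hnum (abs_nonneg _)
    (inv_nonneg.2 (mul_self_nonneg δ))

section FiniteProbability

variable [Fintype Ω] {P : Ω → ℝ}

lemma pr_nonneg (hP : ∀ ω, 0 ≤ P ω) (E : Ω → Prop) : 0 ≤ pr P E :=
  sum_nonneg fun ω _ => by split_ifs <;> simp [hP ω]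

lemma pr_mono (hP : ∀ ω, 0 ≤ P ω) {E F : Ω → Prop} (h : ∀ ω, E ω → F ω) :
    pr P E ≤ pr P F :=
  sum_le_sum fun ω _ => by
    by_cases hE : E ω
    · simp [hE, h ω hE]
    · by_cases hF : F ω <;> simp [hE, hF, hP ω]

lemma pr_congr {E F : Ω → Prop} (h : ∀ ω, E ω ↔ F ω) : pr P E = pr P F :=
  sum_congr rfl fun ω _ => if_congr (h ω) rfl rfl

lemma pr_eq_pr_and_add_pr_and_not (E F : Ω → Prop) :
    pr P E = pr P (fun ω => E ω ∧ F ω) + pr P (fun ω => E ω ∧ ¬F ω) := by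
  simp only [pr, ← sum_add_distrib]
  refine sum_congr rfl fun ω _ => ?_
  by_cases hE : E ω <;> by_cases hF : F ω <;> simp [hE, hF]

lemma eq_zero_of_pr_eq_zero (hP : ∀ ω, 0 ≤ P ω) {E : Ω → Prop} (hE : pr P E = 0) {ω : Ω}
    (hω : E ω) : P ω = 0 := by
  have := (sum_eq_zero_iff_of_nonneg fun ω _ => by split_ifs <;> simp [hP ω]).1 hE ω
    (mem_univ ω)
  simpa [hω] using this

-- When `pr P E = 0`, `cpr P F E` is the junk value `0` and the left side vanishes too.
lemma pr_and_eq_pr_mul_cpr (hP : ∀ ω, 0 ≤ P ω) (F E : Ω → Prop) :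
    pr P (fun ω => F ω ∧ E ω) = pr P E * cpr P F E := by
  rcases (pr_nonneg hP E).eq_or_lt with hE | hE
  · rw [← hE, zero_mul]
    exact le_antisymm (hE ▸ pr_mono hP fun ω hω => hω.2) (pr_nonneg hP _)
  · rw [cpr, mul_div_cancel₀ _ hE.ne']

lemma sum_ite_mul_eq_pr_mul_cex (hP : ∀ ω, 0 ≤ P ω) (Z : Ω → ℝ) (E : Ω → Prop)
    [DecidablePred E] : (∑ ω, if E ω then P ω * Z ω else 0) = pr P E * cex P Z E := by
  rcases (pr_nonneg hP E).eq_or_lt with hE | hE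
  · rw [← hE, zero_mul]
    refine sum_eq_zero fun ω _ => ?_
    split_ifs with hω
    · rw [eq_zero_of_pr_eq_zero hP hE.symm hω, zero_mul]
    · rfl
  · rw [cex, mul_div_cancel₀ _ hE.ne']
    exact sum_congr rfl fun _ _ => by split_ifs <;> rfl

lemma cpr_nonneg (hP : ∀ ω, 0 ≤ P ω) (F E : Ω → Prop) : 0 ≤ cpr P F E :=
  div_nonneg (pr_nonneg hP _) (pr_nonneg hP _)

lemma cpr_le_one (hP : ∀ ω, 0 ≤ P ω) (F E : Ω → Prop) : cpr P F E ≤ 1 :=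
  div_le_one_of_le₀ (pr_mono hP fun _ h => h.2) (pr_nonneg hP _)

lemma ex_comp {𝒳 : Type*} [Fintype 𝒳] (X : Ω → 𝒳) (h : 𝒳 → ℝ) :
    ex P (fun ω => h (X ω)) = ∑ x, pr P (fun ω => X ω = x) * h x := by
  simp only [ex, pr, ← sum_filter, sum_mul]
  rw [← sum_fiberwise univ X]
  exact sum_congr rfl fun x _ => sum_congr rfl fun ω hω => by rw [(mem_filter.1 hω).2]

end FiniteProbability

section DoublyRobust

variable {𝒳 𝒯 : Type*} [Fintype Ω] {P : Ω → ℝ}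
  (X : Ω → 𝒳) (A : Ω → 𝒯) (Y : Ω → ℝ) (R : Ω → Bool) (a : 𝒯)

lemma ex_dr_moment_eq_sum_fiber [Fintype 𝒳] (w g : 𝒳 → ℝ) :
    ex P (fun ω => w (X ω) * (if R ω = true ∧ A ω = a then 1 else 0) * (Y ω - g (X ω))
        + (if R ω = false then 1 else 0) * g (X ω))
      = ∑ x, (w x * ((∑ ω, if X ω = x ∧ A ω = a ∧ R ω = true then P ω * Y ω else 0)
          - pr P (fun ω => X ω = x ∧ A ω = a ∧ R ω = true) * g x)
        + pr P (fun ω => X ω = x ∧ R ω = false) * g x) := by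
  rw [ex, ← sum_fiberwise univ X]
  refine sum_congr rfl fun x _ => ?_
  simp only [sum_filter, pr, mul_sub, mul_sum, sum_mul, ← sum_sub_distrib, ← sum_add_distrib]
  refine sum_congr rfl fun ω _ => ?_
  by_cases hX : X ω = x
  · subst hX
    rcases Bool.eq_false_or_eq_true (R ω) with hR | hR <;> by_cases hA : A ω = a <;>
      simp [hR, hA]
    ring
  · simp [hX]

variable {X A R a} {p₀ e₀ : 𝒳 → ℝ}

lemma pr_fiber_target_eq (hP : ∀ ω, 0 ≤ P ω)
    (hp₀ : ∀ x, p₀ x = cpr P (fun ω => R ω = true) (fun ω => X ω = x)) (x : 𝒳) :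
    pr P (fun ω => X ω = x ∧ R ω = false) = pr P (fun ω => X ω = x) * (1 - p₀ x) := by
  have hsplit := pr_eq_pr_and_add_pr_and_not (P := P) (fun ω => X ω = x) (fun ω => R ω = true)
  have htrial : pr P (fun ω => X ω = x ∧ R ω = true) = pr P (fun ω => X ω = x) * p₀ x := by
    rw [pr_congr fun ω => and_comm, hp₀, pr_and_eq_pr_mul_cpr hP]
  have htarget : pr P (fun ω => X ω = x ∧ ¬R ω = true)
      = pr P (fun ω => X ω = x ∧ R ω = false) :=
    pr_congr fun ω => by rw [Bool.not_eq_true]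
  linarith

lemma pr_fiber_treated_eq (hP : ∀ ω, 0 ≤ P ω)
    (hp₀ : ∀ x, p₀ x = cpr P (fun ω => R ω = true) (fun ω => X ω = x))
    (he₀ : ∀ x, e₀ x = cpr P (fun ω => A ω = a) (fun ω => X ω = x ∧ R ω = true)) (x : 𝒳) :
    pr P (fun ω => X ω = x ∧ A ω = a ∧ R ω = true)
      = pr P (fun ω => X ω = x) * (p₀ x * e₀ x) := by
  calc pr P (fun ω => X ω = x ∧ A ω = a ∧ R ω = true)
      = pr P (fun ω => A ω = a ∧ X ω = x ∧ R ω = true) := pr_congr fun ω => and_left_comm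
    _ = pr P (fun ω => R ω = true ∧ X ω = x) * e₀ x := by
        rw [pr_and_eq_pr_mul_cpr hP, ← he₀, pr_congr fun ω => and_comm]
    _ = pr P (fun ω => X ω = x) * (p₀ x * e₀ x) := by
        rw [pr_and_eq_pr_mul_cpr hP, ← hp₀, mul_assoc]

lemma ex_dr_moment_sub_eq_sum [Fintype 𝒳] (hP : ∀ ω, 0 ≤ P ω) {g₀ : 𝒳 → ℝ}
    (hp₀ : ∀ x, p₀ x = cpr P (fun ω => R ω = true) (fun ω => X ω = x))
    (he₀ : ∀ x, e₀ x = cpr P (fun ω => A ω = a) (fun ω => X ω = x ∧ R ω = true))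
    (hg₀ : ∀ x, g₀ x = cex P Y (fun ω => X ω = x ∧ A ω = a ∧ R ω = true)) (w g : 𝒳 → ℝ) :
    ex P (fun ω => w (X ω) * (if R ω = true ∧ A ω = a then 1 else 0) * (Y ω - g (X ω))
        + (if R ω = false then 1 else 0) * g (X ω))
      - ∑ x, pr P (fun ω => X ω = x ∧ R ω = false) * g₀ x
      = ∑ x, pr P (fun ω => X ω = x) * (g x - g₀ x)
          * ((1 - p₀ x) - w x * (p₀ x * e₀ x)) := by
  rw [ex_dr_moment_eq_sum_fiber, ← sum_sub_distrib]
  refine sum_congr rfl fun x _ => ?_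
  rw [sum_ite_mul_eq_pr_mul_cex hP, ← hg₀, pr_fiber_treated_eq hP hp₀ he₀,
    pr_fiber_target_eq hP hp₀]
  ring

end DoublyRobust

theorem doubly_robust_second_order_bias_bound_general
    {𝒳 𝒯 : Type*} [Fintype Ω] [Fintype 𝒳]
    (P : Ω → ℝ) (hP0 : ∀ ω, 0 ≤ P ω)
    (X : Ω → 𝒳) (A : Ω → 𝒯) (Y : Ω → ℝ) (R : Ω → Bool) (a : 𝒯)
    (δ : ℝ) (hδ0 : 0 < δ)
    -- true nuisance functions and their margin conditions on the support of X
    (p₀ e₀ g₀ : 𝒳 → ℝ)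
    (hp₀ : ∀ x, p₀ x = cpr P (fun ω => R ω = true) (fun ω => X ω = x))
    (he₀ : ∀ x, e₀ x = cpr P (fun ω => A ω = a) (fun ω => X ω = x ∧ R ω = true))
    (hg₀ : ∀ x, g₀ x = cex P Y (fun ω => X ω = x ∧ A ω = a ∧ R ω = true)) :
    ∃ C : ℝ, ∀ g p e : 𝒳 → ℝ,
      (∀ x, δ ≤ p x ∧ p x ≤ 1 - δ) → (∀ x, δ ≤ e x ∧ e x ≤ 1) →
      |(pr P (fun ω => R ω = false))⁻¹
          * ex P (fun ω =>
              ((1 - p (X ω)) * (if R ω = true ∧ A ω = a then (1 : ℝ) else 0)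
                  / (e (X ω) * p (X ω)))
                * (Y ω - g (X ω))
              + (if R ω = false then (1 : ℝ) else 0) * g (X ω))
        - ∑ x, cpr P (fun ω => X ω = x) (fun ω => R ω = false)
            * cex P Y (fun ω => X ω = x ∧ A ω = a ∧ R ω = true)|
        ≤ C * Real.sqrt (ex P (fun ω => (g (X ω) - g₀ (X ω)) ^ 2))
            * (Real.sqrt (ex P (fun ω => (p (X ω) - p₀ (X ω)) ^ 2))
                + Real.sqrt (ex P (fun ω => (e (X ω) - e₀ (X ω)) ^ 2))) := by
  refine ⟨(pr P (fun ω => R ω = false))⁻¹ * (δ * δ)⁻¹, fun g p e hp he => ?_⟩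
  have hψ : ∑ x, cpr P (fun ω => X ω = x) (fun ω => R ω = false)
        * cex P Y (fun ω => X ω = x ∧ A ω = a ∧ R ω = true)
      = (pr P (fun ω => R ω = false))⁻¹
          * ∑ x, pr P (fun ω => X ω = x ∧ R ω = false) * g₀ x := by
    simp only [cpr, ← hg₀, mul_sum, div_eq_inv_mul, mul_assoc]
  have hweight : ∀ ω, (1 - p (X ω)) * (if R ω = true ∧ A ω = a then (1 : ℝ) else 0)
      / (e (X ω) * p (X ω))
      = (1 - p (X ω)) / (e (X ω) * p (X ω)) * (if R ω = true ∧ A ω = a then 1 else 0) :=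
    fun ω => mul_div_right_comm _ _ _
  have hp₀_mem : ∀ x, 0 ≤ p₀ x ∧ p₀ x ≤ 1 := fun x =>
    hp₀ x ▸ ⟨cpr_nonneg hP0 _ _, cpr_le_one hP0 _ _⟩
  have hT : 0 ≤ (pr P (fun ω => R ω = false))⁻¹ := inv_nonneg.2 (pr_nonneg hP0 _)
  simp only [hweight]
  rw [hψ, ← mul_sub,
    ex_dr_moment_sub_eq_sum Y hP0 hp₀ he₀ hg₀ (fun x => (1 - p x) / (e x * p x)),
    ex_comp X (fun x => (g x - g₀ x) ^ 2), ex_comp X (fun x => (p x - p₀ x) ^ 2),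
    ex_comp X (fun x => (e x - e₀ x) ^ 2), abs_mul, abs_of_nonneg hT, mul_assoc, mul_assoc]
  refine mul_le_mul_of_nonneg_left ?_ hT
  rw [← mul_assoc]
  exact abs_sum_mul_mul_le_of_abs_le univ (fun x => pr_nonneg hP0 _) (by positivity) fun x =>
    abs_one_sub_sub_div_mul_le hδ0 (hp x).1 (by linarith [hp x]) (he x).1 (he x).2
      (hp₀_mem x).1 (hp₀_mem x).2

/-- Second-order bias bound for the doubly robust functional: there is a
constant C (depending only on δ and ℙ(R = false)) bounding |Φ(g, e, p) − ψ| by the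
product of L²-errors of the nuisance estimators. -/
theorem doubly_robust_second_order_bias_bound
    {𝒳 𝒯 : Type*} [Fintype Ω] [Fintype 𝒳] [Fintype 𝒯]
    (P : Ω → ℝ) (hP0 : ∀ ω, 0 ≤ P ω) (hP1 : ∑ ω, P ω = 1)
    (X : Ω → 𝒳) (A : Ω → 𝒯) (Y : Ω → ℝ) (R : Ω → Bool) (a : 𝒯)
    -- positivity
    (hposT : 0 < pr P (fun ω => R ω = false))
    (hpos : ∀ x, 0 < pr P (fun ω => X ω = x) →
      0 < pr P (fun ω => A ω = a ∧ X ω = x ∧ R ω = true))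
    (δ : ℝ) (hδ0 : 0 < δ) (hδhalf : δ ≤ 1 / 2)
    -- true nuisance functions and their margin conditions on the support of X
    (p₀ e₀ g₀ : 𝒳 → ℝ)
    (hp₀ : ∀ x, p₀ x = cpr P (fun ω => R ω = true) (fun ω => X ω = x))
    (he₀ : ∀ x, e₀ x = cpr P (fun ω => A ω = a) (fun ω => X ω = x ∧ R ω = true))
    (hg₀ : ∀ x, g₀ x = cex P Y (fun ω => X ω = x ∧ A ω = a ∧ R ω = true))
    (hp₀rng : ∀ x, 0 < pr P (fun ω => X ω = x) → δ ≤ p₀ x ∧ p₀ x ≤ 1 - δ)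
    (he₀rng : ∀ x, 0 < pr P (fun ω => X ω = x) → δ ≤ e₀ x) :
    ∃ C : ℝ, ∀ g p e : 𝒳 → ℝ,
      (∀ x, δ ≤ p x ∧ p x ≤ 1 - δ) → (∀ x, δ ≤ e x ∧ e x ≤ 1) →
      |(pr P (fun ω => R ω = false))⁻¹
          * ex P (fun ω =>
              ((1 - p (X ω)) * (if R ω = true ∧ A ω = a then (1 : ℝ) else 0)
                  / (e (X ω) * p (X ω)))
                * (Y ω - g (X ω))
              + (if R ω = false then (1 : ℝ) else 0) * g (X ω))
        - ∑ x, cpr P (fun ω => X ω = x) (fun ω => R ω = false)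
            * cex P Y (fun ω => X ω = x ∧ A ω = a ∧ R ω = true)|
        ≤ C * Real.sqrt (ex P (fun ω => (g (X ω) - g₀ (X ω)) ^ 2))
            * (Real.sqrt (ex P (fun ω => (p (X ω) - p₀ (X ω)) ^ 2))
                + Real.sqrt (ex P (fun ω => (e (X ω) - e₀ (X ω)) ^ 2))) :=
  doubly_robust_second_order_bias_bound_general P hP0 X A Y R a δ hδ0 p₀ e₀ g₀ hp₀ he₀ hg₀
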